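/- arXiv:math/0603215 — 3 statements merged into one kernel-verified Lean document; each statement's English description precedes it below -/
import Mathlib

section
/- Let N ≥ 2 be an integer, A : ℤ/Nℤ → {0,1} a particle configuration with B_i := 1 − A_i, and let φ_a, φ_b : ℝ → ℝ be 1-periodic functions with ψ := φ_a − φ_b. Define Z(A) := exp((1/N) Σ_{i∈ℤ/Nℤ} [φ_a(i/N) A_i + φ_b(i/N) B_i]), and for i ∈ ℤ/Nℤ let σ_iA be the configuration obtained from A by exchanging the values at sites i and i+1. Then Σ_{i∈ℤ/Nℤ} [λ_ab(N) A_i B_{i+1} + λ_ba(N) B_i A_{i+1}] (Z(σ_iA) − Z(A)) = L^N(A) · Z(A), where L^N(A) := Σ_{i∈ℤ/Nℤ} [λ̃_ab(i,N) A_i B_{i+1} + λ̃_ba(i,N) B_i A_{i+1}]. -/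
/-!
Exchanging the occupations of sites `i` and `i + 1` changes the exponent of `Z` only through
the two swapped sites, so `Z(σᵢA) = Z(A) · exp((Aᵢ - Aᵢ₊₁) Δψ(i/N) / N)`; the `φ_b` part cancels
and periodicity of `φ_a`, `φ_b` handles the wrap-around site `i = N - 1`. Since `Aᵢ, Aᵢ₊₁ ∈ {0, 1}`,
the rate `λ_ab Aᵢ Bᵢ₊₁ + λ_ba Bᵢ Aᵢ₊₁` is nonzero only when `Aᵢ - Aᵢ₊₁ = ±1`, and each summand
becomes the corresponding summand of `L^N(A) · Z(A)`.
-/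

open Finset

lemma Function.Periodic.apply_zmod_val_add_one_div {φ : ℝ → ℝ} (hφ : Function.Periodic φ 1)
    {N : ℕ} [NeZero N] (i : ZMod N) :
    φ ((i + 1).val / N) = φ ((i.val + 1) / N) := by
  have hval : (i + 1).val = (i.val + 1) % N := by
    rw [ZMod.val_add, ZMod.val_one_eq_one_mod, Nat.add_mod_mod]
  rcases (Nat.succ_le_of_lt i.val_lt).lt_or_eq with h | (h : i.val + 1 = N)
  · rw [hval, Nat.mod_eq_of_lt h, Nat.cast_succ]
  · have hN : (N : ℝ) ≠ 0 := Nat.cast_ne_zero.mpr (NeZero.ne N)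
    rw [hval, h, Nat.mod_self, Nat.cast_zero, zero_div, ← Nat.cast_add_one, h, div_self hN,
      ← zero_add 1, hφ]

lemma Finset.sum_mul_comp_swap_sub_sum_mul {ι R : Type*} [Fintype ι] [DecidableEq ι] [CommRing R]
    (f g : ι → R) (i k : ι) :
    ∑ j, f j * g (Equiv.swap i k j) - ∑ j, f j * g j = (f k - f i) * (g i - g k) := by
  rcases eq_or_ne i k with rfl | hik
  · simp
  rw [← sum_sub_distrib, Fintype.sum_eq_add i k hik]
  · simp only [Equiv.swap_apply_left, Equiv.swap_apply_right]
    ring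
  · rintro j ⟨hji, hjk⟩
    rw [Equiv.swap_apply_of_ne_of_ne hji hjk, sub_self]

lemma Finset.sum_affine_comp_swap_sub_sum_affine {ι R : Type*} [Fintype ι] [DecidableEq ι]
    [CommRing R] (f g C : ι → R) (i k : ι) :
    ∑ j, (f j * C (Equiv.swap i k j) + g j * (1 - C (Equiv.swap i k j)))
      - ∑ j, (f j * C j + g j * (1 - C j))
      = ((f - g) k - (f - g) i) * (C i - C k) := by
  have affine : ∀ D : ι → R, ∑ j, (f j * D j + g j * (1 - D j)) = ∑ j, g j + ∑ j, (f - g) j * D j :=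
    fun D ↦ by rw [← sum_add_distrib]; exact sum_congr rfl fun j _ ↦ by simp only [Pi.sub_apply]; ring
  rw [affine, affine C, add_sub_add_left_eq_sub]
  exact sum_mul_comp_swap_sub_sum_mul (f - g) C i k

lemma jump_rate_mul_exp_sub_one {a b : ℝ} (ha : a = 0 ∨ a = 1) (hb : b = 0 ∨ b = 1) (p q x : ℝ) :
    (p * a * (1 - b) + q * (1 - a) * b) * (Real.exp ((a - b) * x) - 1)
      = p * (Real.exp x - 1) * a * (1 - b) + q * (Real.exp (-x) - 1) * (1 - a) * b := by
  rcases ha with rfl | rfl <;> rcases hb with rfl | rfl <;> norm_num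

theorem stmt_0_general (N : ℕ) [NeZero N]
    (φa φb : ℝ → ℝ) (hφa : Function.Periodic φa 1) (hφb : Function.Periodic φb 1)
    (ψ : ℝ → ℝ) (hψ : ψ = φa - φb)
    (lab lba : ℝ)
    (A : ZMod N → ℝ) (hA : ∀ i, A i = 0 ∨ A i = 1)
    (B : ZMod N → ℝ) (hB : ∀ i, B i = 1 - A i)
    (Z : (ZMod N → ℝ) → ℝ)
    (hZ : ∀ C : ZMod N → ℝ,
      Z C = Real.exp ((1 / (N : ℝ)) *
        ∑ i : ZMod N, (φa ((i.val : ℝ) / N) * C i + φb ((i.val : ℝ) / N) * (1 - C i))))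
    (σ : ZMod N → (ZMod N → ℝ) → ZMod N → ℝ)
    (hσ : ∀ i C j, σ i C j = if j = i then C (i + 1) else if j = i + 1 then C i else C j)
    (dψ : ZMod N → ℝ)
    (hdψ : ∀ i : ZMod N, dψ i = ψ (((i.val : ℝ) + 1) / N) - ψ ((i.val : ℝ) / N))
    (ltab ltba : ZMod N → ℝ)
    (hltab : ∀ i, ltab i = lab * (Real.exp (dψ i / N) - 1))
    (hltba : ∀ i, ltba i = lba * (Real.exp (-dψ i / N) - 1)) :
    ∑ i : ZMod N, (lab * A i * B (i + 1) + lba * B i * A (i + 1)) * (Z (σ i A) - Z A)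
      = (∑ i : ZMod N, (ltab i * A i * B (i + 1) + ltba i * B i * A (i + 1))) * Z A := by
  have hσ_swap : ∀ i, σ i A = A ∘ Equiv.swap i (i + 1) := fun i ↦
    funext fun j ↦ by rw [hσ, Function.comp_apply, Equiv.swap_apply_def]; split_ifs <;> rfl
  have hZσ : ∀ i, Z (σ i A) - Z A = Z A * (Real.exp ((A i - A (i + 1)) * (dψ i / N)) - 1) := by
    intro i
    rw [hZ, hZ, mul_sub_one, ← Real.exp_add, hσ_swap, Function.comp_def]
    congr 2
    rw [← sub_eq_iff_eq_add', ← mul_sub, sum_affine_comp_swap_sub_sum_affine]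
    rw [hdψ, hψ]
    simp only [Pi.sub_apply, hφa.apply_zmod_val_add_one_div, hφb.apply_zmod_val_add_one_div]
    ring
  rw [sum_mul]
  refine sum_congr rfl fun i _ ↦ ?_
  rw [hZσ, hB, hB, hltab, hltba, neg_div]
  linear_combination Z A * jump_rate_mul_exp_sub_one (hA i) (hA (i + 1)) lab lba (dψ i / N)

/-- For the ASEP on the discrete torus `ℤ/Nℤ` (`N ≥ 2`), with
particle configuration `A` (values in `{0,1}`), holes `B i = 1 - A i`, 1-periodic
functions `φa, φb`, `ψ = φa - φb`, the exponential functional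
`Z(A) = exp((1/N) Σᵢ [φa(i/N) Aᵢ + φb(i/N) Bᵢ])`, and the exchange maps `σᵢ`,
one has `Σᵢ [λ_ab Aᵢ Bᵢ₊₁ + λ_ba Bᵢ Aᵢ₊₁] (Z(σᵢA) - Z(A)) = L^N(A) · Z(A)` where
`L^N(A) = Σᵢ [λ̃_ab(i,N) Aᵢ Bᵢ₊₁ + λ̃_ba(i,N) Bᵢ Aᵢ₊₁]`. -/
theorem stmt_0 (N : ℕ) [NeZero N] (hN : 2 ≤ N)
    (φa φb : ℝ → ℝ) (hφa : Function.Periodic φa 1) (hφb : Function.Periodic φb 1)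
    (ψ : ℝ → ℝ) (hψ : ψ = φa - φb)
    (lab lba : ℝ) (hlab : 0 < lab) (hlba : 0 < lba)
    (A : ZMod N → ℝ) (hA : ∀ i, A i = 0 ∨ A i = 1)
    (B : ZMod N → ℝ) (hB : ∀ i, B i = 1 - A i)
    (Z : (ZMod N → ℝ) → ℝ)
    (hZ : ∀ C : ZMod N → ℝ,
      Z C = Real.exp ((1 / (N : ℝ)) *
        ∑ i : ZMod N, (φa ((i.val : ℝ) / N) * C i + φb ((i.val : ℝ) / N) * (1 - C i))))
    (σ : ZMod N → (ZMod N → ℝ) → ZMod N → ℝ)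
    (hσ : ∀ i C j, σ i C j = if j = i then C (i + 1) else if j = i + 1 then C i else C j)
    (dψ : ZMod N → ℝ)
    (hdψ : ∀ i : ZMod N, dψ i = ψ (((i.val : ℝ) + 1) / N) - ψ ((i.val : ℝ) / N))
    (ltab ltba : ZMod N → ℝ)
    (hltab : ∀ i, ltab i = lab * (Real.exp (dψ i / N) - 1))
    (hltba : ∀ i, ltba i = lba * (Real.exp (-dψ i / N) - 1)) :
    ∑ i : ZMod N, (lab * A i * B (i + 1) + lba * B i * A (i + 1)) * (Z (σ i A) - Z A)
      = (∑ i : ZMod N, (ltab i * A i * B (i + 1) + ltba i * B i * A (i + 1))) * Z A :=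
  stmt_0_general N φa φb hφa hφb ψ hψ lab lba A hA B hB Z hZ σ hσ dψ hdψ ltab ltba hltab hltba
end

section
/- Under the scaling assumption λ(N) = λN² + o(N²) and μ(N) = μN + o(N) with λ, μ > 0 fixed constants, there exists a constant C > 0 (depending only on ψ and on the rate sequences) such that for every integer N ≥ 2 and every particle configuration A : ℤ/Nℤ → {0,1}, |L^N(A)| ≤ C. -/
/-!
Put `x i = Δψ(i/N) / N`, which is `O(N⁻²)`. Expanding both exponentials to first order, the
second-order remainders contribute `N · N² · N⁻⁴` and the part `(λ_ab - λ_ba)/2 · x i` of the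
first-order term contributes `N · N · N⁻²`. What is left, `(λ_ab + λ_ba)/2 · x i · (A i - A (i+1))`,
is of order one at every site, but summation by parts on the torus turns its sum into
`(λ_ab + λ_ba)/2 · ∑ (x (i+1) - x i) · A (i+1)`, and `x (i+1) - x i` is a second difference of
`ψ`, of order `N⁻³`.
-/

open Finset fwdDiff

theorem abs_sub_le_of_hasDerivAt {f f' : ℝ → ℝ} {K : ℝ} (hf : ∀ t, HasDerivAt f (f' t) t)
    (hK : ∀ t, |f' t| ≤ K) (x y : ℝ) : |f y - f x| ≤ K * |y - x| :=
  convex_univ.norm_image_sub_le_of_norm_hasDerivWithin_le (fun t _ => (hf t).hasDerivWithinAt)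
    (fun t _ => hK t) (Set.mem_univ x) (Set.mem_univ y)

theorem hasDerivAt_fwdDiff {f : ℝ → ℝ} (hf : Differentiable ℝ f) (h t : ℝ) :
    HasDerivAt (Δ_[h] f) (Δ_[h] (deriv f) t) t :=
  ((hf (t + h)).hasDerivAt.comp_add_const t h).sub (hf t).hasDerivAt

theorem abs_fwdDiff_fwdDiff_le {f : ℝ → ℝ} (hf : Differentiable ℝ f)
    (hf' : Differentiable ℝ (deriv f)) {K : ℝ} (hK : ∀ t, |deriv (deriv f) t| ≤ K) (h t : ℝ) :
    |Δ_[h] (Δ_[h] f) t| ≤ K * h ^ 2 := by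
  have hslope : ∀ s, |Δ_[h] (deriv f) s| ≤ K * |h| := fun s => by
    simpa [fwdDiff] using abs_sub_le_of_hasDerivAt (fun t => (hf' t).hasDerivAt) hK s (s + h)
  have := abs_sub_le_of_hasDerivAt (hasDerivAt_fwdDiff hf h) hslope t (t + h)
  rwa [add_sub_cancel_left, mul_assoc, ← sq, sq_abs] at this

theorem Function.Periodic.fwdDiff {f : ℝ → ℝ} {c : ℝ} (hf : Function.Periodic f c) (h : ℝ) :
    Function.Periodic (Δ_[h] f) c := fun t => by
  simp only [_root_.fwdDiff, add_right_comm t c h, hf _]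

theorem Function.Periodic.deriv {f : ℝ → ℝ} {c : ℝ} (hf : Function.Periodic f c) :
    Function.Periodic (deriv f) c := fun t => by
  rw [← deriv_comp_add_const, funext hf]

theorem Function.Periodic.exists_abs_le {f : ℝ → ℝ} {c : ℝ} (hf : Function.Periodic f c)
    (hc : c ≠ 0) (hcont : Continuous f) : ∃ K, ∀ x, |f x| ≤ K := by
  obtain ⟨K, hK⟩ := isBounded_iff_forall_norm_le.mp (hf.isBounded_of_continuous hc hcont)
  exact ⟨K, fun x => hK _ (Set.mem_range_self x)⟩

theorem ZMod.exists_val_add_one_eq {N : ℕ} [NeZero N] (i : ZMod N) :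
    ∃ k : ℤ, ((i + 1).val : ℝ) = i.val + 1 + k * N := by
  have hcong : ((((i + 1).val : ℤ)) : ZMod N) = (((i.val + 1 : ℤ)) : ZMod N) := by
    push_cast
    simp [ZMod.natCast_val, ZMod.cast_id]
  obtain ⟨k, hk⟩ := (ZMod.intCast_eq_intCast_iff_dvd_sub _ _ _).mp hcong
  have hkR := congrArg (Int.cast : ℤ → ℝ) hk
  push_cast at hkR
  exact ⟨-k, by push_cast; linarith⟩

theorem Function.Periodic.apply_val_add_one_div {f : ℝ → ℝ} (hf : Function.Periodic f 1)
    {N : ℕ} [NeZero N] (i : ZMod N) :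
    f (((i + 1).val : ℝ) / N) = f (i.val / N + 1 / N) := by
  obtain ⟨k, hk⟩ := ZMod.exists_val_add_one_eq i
  have hN : (N : ℝ) ≠ 0 := NeZero.ne _
  have : ((i + 1).val : ℝ) / N = i.val / N + 1 / N + k * 1 := by
    rw [hk]; field_simp
  rw [this, hf.int_mul k]

/-- The paper's `Δψ(i/N)`. -/
noncomputable def latticeDiff (ψ : ℝ → ℝ) (N : ℕ) (i : ZMod N) : ℝ :=
  ψ ((i.val + 1) / N) - ψ (i.val / N)

theorem latticeDiff_eq_fwdDiff (ψ : ℝ → ℝ) (N : ℕ) (i : ZMod N) :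
    latticeDiff ψ N i = Δ_[1 / (N : ℝ)] ψ (i.val / N) := by
  simp only [latticeDiff, fwdDiff, add_div]

theorem latticeDiff_add_one_sub {ψ : ℝ → ℝ} (hψ : Function.Periodic ψ 1) {N : ℕ} [NeZero N]
    (i : ZMod N) :
    latticeDiff ψ N (i + 1) - latticeDiff ψ N i
      = Δ_[1 / (N : ℝ)] (Δ_[1 / (N : ℝ)] ψ) (i.val / N) := by
  rw [latticeDiff_eq_fwdDiff, latticeDiff_eq_fwdDiff, (hψ.fwdDiff _).apply_val_add_one_div]
  rfl

theorem exists_abs_latticeDiff_le {ψ : ℝ → ℝ} (hψ : Function.Periodic ψ 1)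
    (hsm : ContDiff ℝ 2 ψ) :
    ∃ K₁ K₂ : ℝ, 0 ≤ K₁ ∧ 0 ≤ K₂ ∧ ∀ (N : ℕ) [NeZero N] (i : ZMod N),
      |latticeDiff ψ N i| ≤ K₁ / N ∧
        |latticeDiff ψ N (i + 1) - latticeDiff ψ N i| ≤ K₂ / N ^ 2 := by
  obtain ⟨K₁, hK₁⟩ := hψ.deriv.exists_abs_le one_ne_zero (hsm.continuous_deriv (by norm_num))
  obtain ⟨K₂, hK₂⟩ := hψ.deriv.deriv.exists_abs_le one_ne_zero
    (hsm.deriv' (n := 1)).continuous_deriv_one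
  have hd : Differentiable ℝ ψ := hsm.differentiable (by norm_num)
  refine ⟨K₁, K₂, (abs_nonneg _).trans (hK₁ 0), (abs_nonneg _).trans (hK₂ 0),
    fun N _ i => ⟨?_, ?_⟩⟩
  · have := abs_sub_le_of_hasDerivAt (fun t => (hd t).hasDerivAt) hK₁ (i.val / N)
      (i.val / N + 1 / N)
    rw [latticeDiff_eq_fwdDiff]
    simpa [fwdDiff, div_eq_mul_inv] using this
  · rw [latticeDiff_add_one_sub hψ]
    simpa [div_pow, div_eq_mul_inv] using
      abs_fwdDiff_fwdDiff_le hd hsm.differentiable_deriv_two hK₂ (1 / N) (i.val / N)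

theorem Real.abs_exp_sub_one_sub_id_le_sq_mul_exp_abs (x : ℝ) :
    |Real.exp x - 1 - x| ≤ x ^ 2 * Real.exp |x| := by
  have h := Complex.norm_exp_sub_sum_le_norm_mul_exp x 2
  simp only [sum_range_succ, sum_range_zero] at h
  norm_num at h
  rw [← Complex.ofReal_exp] at h
  have h' : ‖Real.exp x - (1 + x)‖ ≤ x ^ 2 * Real.exp |x| := by exact_mod_cast h
  rwa [Real.norm_eq_abs, ← sub_sub] at h'

theorem abs_exchange_sub_drift_le (a b x s t : ℝ) (hs : s = 0 ∨ s = 1) (ht : t = 0 ∨ t = 1) :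
    |a * (Real.exp x - 1) * s * (1 - t) + b * (Real.exp (-x) - 1) * (1 - s) * t
        - (a + b) / 2 * x * (s - t)|
      ≤ (|a| + |b|) * (x ^ 2 * Real.exp |x|) + |a - b| / 2 * |x| := by
  have hexpand : ∀ c y : ℝ, |y| = |x| →
      |c * (Real.exp y - 1 - y) + (a - b) / 2 * x|
        ≤ |c| * (x ^ 2 * Real.exp |x|) + |a - b| / 2 * |x| := fun c y hy => by
    calc _ ≤ |c| * |Real.exp y - 1 - y| + |a - b| / 2 * |x| := by
          simpa [abs_mul, abs_div] using abs_add_le (c * (Real.exp y - 1 - y)) ((a - b) / 2 * x)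
      _ ≤ _ := by
          gcongr
          simpa [hy, ← sq_abs y] using Real.abs_exp_sub_one_sub_id_le_sq_mul_exp_abs y
  have hnonneg : 0 ≤ (|a| + |b|) * (x ^ 2 * Real.exp |x|) + |a - b| / 2 * |x| := by positivity
  rcases hs with rfl | rfl <;> rcases ht with rfl | rfl
  · simpa using hnonneg
  · calc _ = |b * (Real.exp (-x) - 1 - -x) + (a - b) / 2 * x| := by ring_nf
      _ ≤ _ := (hexpand b (-x) (abs_neg x)).trans
          (by gcongr; exact le_add_of_nonneg_left (abs_nonneg a))
  · calc _ = |a * (Real.exp x - 1 - x) + (a - b) / 2 * x| := by ring_nf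
      _ ≤ _ := (hexpand a x rfl).trans
          (by gcongr; exact le_add_of_nonneg_right (abs_nonneg b))
  · simpa using hnonneg

theorem Fintype.sum_mul_sub_shift {G R : Type*} [AddGroup G] [Fintype G] [CommRing R]
    (f h : G → R) (g : G) :
    ∑ i, f i * (h i - h (i + g)) = ∑ i, (f (i + g) - f i) * h (i + g) := by
  have hshift : ∑ i, f i * h i = ∑ i, f (i + g) * h (i + g) :=
    (Equiv.sum_comp (Equiv.addRight g) fun i => f i * h i).symm
  simp only [mul_sub, sub_mul, sum_sub_distrib, hshift]

theorem Fintype.abs_sum_le_card_mul {ι : Type*} [Fintype ι] {f : ι → ℝ} {c : ℝ}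
    (h : ∀ i, |f i| ≤ c) : |∑ i, f i| ≤ Fintype.card ι * c :=
  (abs_sum_le_sum_abs _ _).trans ((sum_le_sum fun i _ => h i).trans_eq (by simp))

theorem abs_sum_exchange_le {N : ℕ} [NeZero N] (a b : ℝ) {x A : ZMod N → ℝ}
    (hA : ∀ i, A i = 0 ∨ A i = 1) {X D : ℝ} (hX : ∀ i, |x i| ≤ X)
    (hD : ∀ i, |x (i + 1) - x i| ≤ D) :
    |∑ i, (a * (Real.exp (x i) - 1) * A i * (1 - A (i + 1))
        + b * (Real.exp (-x i) - 1) * (1 - A i) * A (i + 1))|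
      ≤ N * ((|a| + |b|) * (X ^ 2 * Real.exp X) + |a - b| / 2 * X + |a + b| / 2 * D) := by
  have hsplit : ∑ i, (a * (Real.exp (x i) - 1) * A i * (1 - A (i + 1))
        + b * (Real.exp (-x i) - 1) * (1 - A i) * A (i + 1))
      = ∑ i, ((a * (Real.exp (x i) - 1) * A i * (1 - A (i + 1))
        + b * (Real.exp (-x i) - 1) * (1 - A i) * A (i + 1) - (a + b) / 2 * x i * (A i - A (i + 1)))
        + (a + b) / 2 * ((x (i + 1) - x i) * A (i + 1))) := by
    have hdrift : ∑ i, (a + b) / 2 * x i * (A i - A (i + 1))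
        = ∑ i, (a + b) / 2 * ((x (i + 1) - x i) * A (i + 1)) := by
      simp only [mul_assoc, ← mul_sum, Fintype.sum_mul_sub_shift x A 1]
    conv_rhs => rw [sum_add_distrib, sum_sub_distrib, ← hdrift, sub_add_cancel]
  rw [hsplit]
  refine (Fintype.abs_sum_le_card_mul fun i => (abs_add_le _ _).trans (add_le_add ?_ ?_)).trans_eq
    (by rw [ZMod.card])
  · have hx2 : x i ^ 2 ≤ X ^ 2 := by rw [← sq_abs]; gcongr; exact hX i
    refine (abs_exchange_sub_drift_le a b (x i) _ _ (hA i) (hA (i + 1))).trans ?_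
    gcongr <;> exact hX i
  · have hA1 : |A (i + 1)| ≤ 1 := by rcases hA (i + 1) with h | h <;> simp [h]
    rw [abs_mul, abs_mul, abs_div, abs_two]
    calc _ ≤ |a + b| / 2 * (D * 1) := mul_le_mul_of_nonneg_left
          (mul_le_mul (hD i) hA1 (abs_nonneg _) ((abs_nonneg _).trans (hD i))) (by positivity)
      _ = _ := by ring

theorem Asymptotics.IsLittleO.exists_abs_le_mul {u v : ℕ → ℝ}
    (h : u =o[Filter.atTop] v) : ∃ c, ∀ N, v N ≠ 0 → |u N| ≤ c * |v N| := by
  obtain ⟨c, hc⟩ := h.tendsto_div_nhds_zero.abs.bddAbove_range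
  refine ⟨c, fun N hN => ?_⟩
  have := hc (Set.mem_range_self N)
  simp only [abs_div] at this
  rwa [div_le_iff₀ (abs_pos.mpr hN)] at this

theorem abs_add_abs_le_abs_add_add_abs_sub (a b : ℝ) : |a| + |b| ≤ |a + b| + |a - b| := by
  cases abs_cases a <;> cases abs_cases b <;>
    linarith [le_abs_self (a + b), neg_abs_le (a + b), le_abs_self (a - b), neg_abs_le (a - b)]

theorem exists_rate_bound {lab lba : ℕ → ℝ} {lam mu : ℝ}
    (hsum : (fun N : ℕ => (lab N + lba N) / 2 - lam * (N : ℝ) ^ 2) =o[Filter.atTop]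
      fun N : ℕ => (N : ℝ) ^ 2)
    (hdiff : (fun N : ℕ => (lab N - lba N) - mu * (N : ℝ)) =o[Filter.atTop]
      fun N : ℕ => (N : ℝ)) :
    ∃ R, 0 ≤ R ∧ ∀ N : ℕ, 1 ≤ N → |lab N| + |lba N| ≤ R * N ^ 2 ∧ |lab N - lba N| ≤ R * N := by
  obtain ⟨c₁, hc₁⟩ := hsum.exists_abs_le_mul
  obtain ⟨c₂, hc₂⟩ := hdiff.exists_abs_le_mul
  refine ⟨2 * (|lam| + |c₁|) + |mu| + |c₂|, by positivity, fun N hN => ?_⟩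
  have hN : (1 : ℝ) ≤ N := by exact_mod_cast hN
  have h₁ := abs_le.mp (hc₁ N (by positivity))
  have h₂ := abs_le.mp (hc₂ N (by positivity))
  rw [abs_of_pos (by positivity)] at h₁ h₂
  have hsum' : |lab N + lba N| ≤ 2 * (|lam| + |c₁|) * N ^ 2 := by
    rw [abs_le]
    constructor <;> nlinarith [le_abs_self lam, neg_abs_le lam, le_abs_self c₁, neg_abs_le c₁]
  have hdiff' : |lab N - lba N| ≤ (|mu| + |c₂|) * N := by
    rw [abs_le]
    constructor <;> nlinarith [le_abs_self mu, neg_abs_le mu, le_abs_self c₂, neg_abs_le c₂]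
  have hN2 : (|mu| + |c₂|) * N ≤ (|mu| + |c₂|) * N ^ 2 := by gcongr; nlinarith
  have := abs_add_abs_le_abs_add_add_abs_sub (lab N) (lba N)
  constructor <;> nlinarith [abs_nonneg mu, abs_nonneg c₂, abs_nonneg lam, abs_nonneg c₁]

theorem scaled_exchange_bound_le {N R K₁ K₂ a b : ℝ} (hN : 1 ≤ N) (hR : 0 ≤ R) (hK₁ : 0 ≤ K₁)
    (hK₂ : 0 ≤ K₂) (hab : |a| + |b| ≤ R * N ^ 2) (hdiff : |a - b| ≤ R * N) :
    N * ((|a| + |b|) * ((K₁ / N ^ 2) ^ 2 * Real.exp (K₁ / N ^ 2)) + |a - b| / 2 * (K₁ / N ^ 2)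
        + |a + b| / 2 * (K₂ / N ^ 3))
      ≤ R * (K₁ ^ 2 * Real.exp K₁ + K₁ + K₂) := by
  have hexp : Real.exp (K₁ / N ^ 2) ≤ Real.exp K₁ :=
    Real.exp_le_exp.mpr (div_le_self hK₁ (one_le_pow₀ hN))
  have hsum : |a + b| ≤ R * N ^ 2 := (abs_add_le a b).trans hab
  calc _ ≤ N * (R * N ^ 2 * ((K₁ / N ^ 2) ^ 2 * Real.exp K₁) + R * N / 2 * (K₁ / N ^ 2)
        + R * N ^ 2 / 2 * (K₂ / N ^ 3)) := by gcongr
    _ = R * (K₁ ^ 2 * Real.exp K₁ / N + K₁ / 2 + K₂ / 2) := by field_simp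
    _ ≤ R * (K₁ ^ 2 * Real.exp K₁ + K₁ + K₂) := by
        gcongr
        · exact div_le_self (by positivity) hN
        · linarith
        · linarith

theorem stmt_1_general (ψ : ℝ → ℝ) (hper : Function.Periodic ψ 1) (hsm : ContDiff ℝ 2 ψ)
    (lab lba : ℕ → ℝ) (lam mu : ℝ)
    (hscale1 : (fun N : ℕ => (lab N + lba N) / 2 - lam * (N : ℝ) ^ 2) =o[Filter.atTop]
      fun N : ℕ => (N : ℝ) ^ 2)
    (hscale2 : (fun N : ℕ => (lab N - lba N) - mu * (N : ℝ)) =o[Filter.atTop]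
      fun N : ℕ => (N : ℝ)) :
    ∃ C > 0, ∀ N : ℕ, 2 ≤ N → ∀ [NeZero N], ∀ A : ZMod N → ℝ, (∀ i, A i = 0 ∨ A i = 1) →
      |∑ i : ZMod N,
          (lab N * (Real.exp ((ψ (((i.val : ℝ) + 1) / N) - ψ ((i.val : ℝ) / N)) / N) - 1)
              * A i * (1 - A (i + 1))
            + lba N * (Real.exp (-(ψ (((i.val : ℝ) + 1) / N) - ψ ((i.val : ℝ) / N)) / N) - 1)
              * (1 - A i) * A (i + 1))| ≤ C := by
  obtain ⟨K₁, K₂, hK₁, hK₂, hψ⟩ := exists_abs_latticeDiff_le hper hsm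
  obtain ⟨R, hR, hrate⟩ := exists_rate_bound hscale1 hscale2
  refine ⟨R * (K₁ ^ 2 * Real.exp K₁ + K₁ + K₂) + 1, by positivity, fun N hN _ A hA => ?_⟩
  have hN1 : (1 : ℝ) ≤ N := by exact_mod_cast one_le_two.trans hN
  have hN0 : (0 : ℝ) < N := by linarith
  have hx : ∀ i, |latticeDiff ψ N i / N| ≤ K₁ / N ^ 2 := fun i => by
    rw [abs_div, abs_of_pos hN0, sq, ← div_div]
    gcongr
    exact (hψ N i).1
  have hD : ∀ i, |latticeDiff ψ N (i + 1) / N - latticeDiff ψ N i / N| ≤ K₂ / N ^ 3 := fun i => by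
    rw [← sub_div, abs_div, abs_of_pos hN0, pow_succ, ← div_div]
    gcongr
    exact (hψ N i).2
  obtain ⟨hab, hdiff⟩ := hrate N (one_le_two.trans hN)
  simp only [neg_div]
  calc _ ≤ _ := abs_sum_exchange_le (lab N) (lba N) hA hx hD
    _ ≤ _ := scaled_exchange_bound_le hN1 hR hK₁ hK₂ hab hdiff
    _ ≤ _ := le_add_of_nonneg_right zero_le_one

/-- Under the scaling `λ(N) = λN² + o(N²)`, `μ(N) = μN + o(N)`
(with `λ(N) = (λ_ab(N)+λ_ba(N))/2`, `μ(N) = λ_ab(N) - λ_ba(N)` and `λ, μ > 0` fixed),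
there is a constant `C > 0` such that for every `N ≥ 2` and every particle
configuration `A : ℤ/Nℤ → {0,1}`, `|L^N(A)| ≤ C`, where
`L^N(A) = Σᵢ [λ̃_ab(i,N) Aᵢ Bᵢ₊₁ + λ̃_ba(i,N) Bᵢ Aᵢ₊₁]`,
`λ̃_ab(i,N) = λ_ab(N)(exp(Δψ(i/N)/N) - 1)`, `λ̃_ba(i,N) = λ_ba(N)(exp(-Δψ(i/N)/N) - 1)`,
`Δψ(i/N) = ψ((i+1)/N) - ψ(i/N)` and `ψ` is 1-periodic and C². -/
theorem stmt_1 (ψ : ℝ → ℝ) (hper : Function.Periodic ψ 1) (hsm : ContDiff ℝ 2 ψ)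
    (lab lba : ℕ → ℝ) (hlab : ∀ N, 0 < lab N) (hlba : ∀ N, 0 < lba N)
    (lam mu : ℝ) (hlam : 0 < lam) (hmu : 0 < mu)
    (hscale1 : (fun N : ℕ => (lab N + lba N) / 2 - lam * (N : ℝ) ^ 2) =o[Filter.atTop]
      fun N : ℕ => (N : ℝ) ^ 2)
    (hscale2 : (fun N : ℕ => (lab N - lba N) - mu * (N : ℝ)) =o[Filter.atTop]
      fun N : ℕ => (N : ℝ)) :
    ∃ C > 0, ∀ N : ℕ, 2 ≤ N → ∀ [NeZero N], ∀ A : ZMod N → ℝ, (∀ i, A i = 0 ∨ A i = 1) →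
      |∑ i : ZMod N,
          (lab N * (Real.exp ((ψ (((i.val : ℝ) + 1) / N) - ψ ((i.val : ℝ) / N)) / N) - 1)
              * A i * (1 - A (i + 1))
            + lba N * (Real.exp (-(ψ (((i.val : ℝ) + 1) / N) - ψ ((i.val : ℝ) / N)) / N) - 1)
              * (1 - A i) * A (i + 1))| ≤ C :=
  stmt_1_general ψ hper hsm lab lba lam mu hscale1 hscale2
end

section
/- Let N ≥ 2 be an integer, A : ℤ/Nℤ → {0,1} a particle configuration with B_i := 1 − A_i, and let φ_a, φ_b : ℝ → ℝ be 1-periodic functions with ψ := φ_a − φ_b. Define Z(A) := exp((1/N) Σ_{i∈ℤ/Nℤ} [φ_a(i/N) A_i + φ_b(i/N) B_i]), and for i ∈ ℤ/Nℤ let σ_iA be the configuration obtained from A by exchanging the values at sites i and i+1. Then Σ_{i∈ℤ/Nℤ} [λ_ab(N) A_i B_{i+1} + λ_ba(N) B_i A_{i+1}] (Z(σ_iA) − Z(A))² = Z(A)² · R^N(A), where R^N(A) := Σ_{i∈ℤ/Nℤ} [ (λ̃_ab(i,N)²/λ_ab(N)) A_i B_{i+1} + (λ̃_ba(i,N)²/λ_ba(N))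 B_i A_{i+1} ]. -/
/-!
Exchanging the values at sites `i` and `i + 1` changes the exponent of `Z` only through those
two sites, by `(Aᵢ - Aᵢ₊₁) Δψ(i/N) / N` (periodicity of `φa`, `φb` takes care of the wrap-around
site `i = N - 1`), so `Z(σᵢA) = Z(A) exp((Aᵢ - Aᵢ₊₁) Δψ(i/N) / N)`. The identity then holds term
by term: the rate vanishes unless `Aᵢ ≠ Aᵢ₊₁`, and in each of these two cases the exponential
factor is `exp(±Δψ(i/N) / N)`.
-/

theorem Function.Periodic.apply_zmod_val_add_natCast_div {f : ℝ → ℝ} (hf : Function.Periodic f 1)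
    {N : ℕ} [NeZero N] (i : ZMod N) (n : ℕ) :
    f (((i + n).val : ℝ) / N) = f (((i.val : ℝ) + n) / N) := by
  have hN : (N : ℝ) ≠ 0 := Nat.cast_ne_zero.mpr (NeZero.ne N)
  set q := (i.val + n) / N
  have hval : (i + n).val + N * q = i.val + n := by
    rw [ZMod.val_add, ZMod.val_natCast, Nat.add_mod_mod, Nat.mod_add_div]
  have hcast : ((i + n).val : ℝ) = (i.val + n : ℝ) - q * N := by
    rw [eq_sub_iff_add_eq, mul_comm]; exact_mod_cast hval
  rw [hcast, sub_div, mul_div_cancel_right₀ _ hN, ← mul_one (q : ℝ), hf.sub_nat_mul_eq]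

theorem sum_affine_comp_swap_sub {ι R : Type*} [Fintype ι] [DecidableEq ι] [CommRing R]
    (a b C : ι → R) {i k : ι} (hik : i ≠ k) :
    ∑ j, (a j * C (Equiv.swap i k j) + b j * (1 - C (Equiv.swap i k j)))
        - ∑ j, (a j * C j + b j * (1 - C j))
      = ((a i - b i) - (a k - b k)) * (C k - C i) := by
  rw [← Finset.sum_sub_distrib, Fintype.sum_eq_add i k hik]
  · simp only [Equiv.swap_apply_left, Equiv.swap_apply_right]
    ring
  · rintro j ⟨hji, hjk⟩
    rw [Equiv.swap_apply_of_ne_of_ne hji hjk, sub_self]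

theorem rate_mul_sq_exp_sub_one {lab lba a b : ℝ}
    (ha : a = 0 ∨ a = 1) (hb : b = 0 ∨ b = 1) (x : ℝ) :
    (lab * a * (1 - b) + lba * (1 - a) * b) * (Real.exp ((a - b) * x) - 1) ^ 2
      = (lab * (Real.exp x - 1)) ^ 2 / lab * a * (1 - b)
        + (lba * (Real.exp (-x) - 1)) ^ 2 / lba * (1 - a) * b := by
  rcases ha with rfl | rfl <;> rcases hb with rfl | rfl <;> field_simp <;> ring_nf

theorem stmt_3_general (N : ℕ) [NeZero N] (hN : 2 ≤ N)
    (φa φb : ℝ → ℝ) (hφa : Function.Periodic φa 1) (hφb : Function.Periodic φb 1)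
    (ψ : ℝ → ℝ) (hψ : ψ = φa - φb)
    (lab lba : ℝ)
    (A : ZMod N → ℝ) (hA : ∀ i, A i = 0 ∨ A i = 1)
    (B : ZMod N → ℝ) (hB : ∀ i, B i = 1 - A i)
    (Z : (ZMod N → ℝ) → ℝ)
    (hZ : ∀ C : ZMod N → ℝ,
      Z C = Real.exp ((1 / (N : ℝ)) *
        ∑ i : ZMod N, (φa ((i.val : ℝ) / N) * C i + φb ((i.val : ℝ) / N) * (1 - C i))))
    (σ : ZMod N → (ZMod N → ℝ) → ZMod N → ℝ)
    (hσ : ∀ i C j, σ i C j = if j = i then C (i + 1) else if j = i + 1 then C i else C j)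
    (dψ : ZMod N → ℝ)
    (hdψ : ∀ i : ZMod N, dψ i = ψ (((i.val : ℝ) + 1) / N) - ψ ((i.val : ℝ) / N))
    (ltab ltba : ZMod N → ℝ)
    (hltab : ∀ i, ltab i = lab * (Real.exp (dψ i / N) - 1))
    (hltba : ∀ i, ltba i = lba * (Real.exp (-dψ i / N) - 1)) :
    ∑ i : ZMod N, (lab * A i * B (i + 1) + lba * B i * A (i + 1)) * (Z (σ i A) - Z A) ^ 2
      = Z A ^ 2 *
        ∑ i : ZMod N, (ltab i ^ 2 / lab * A i * B (i + 1) + ltba i ^ 2 / lba * B i * A (i + 1)) := by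
  have : Fact (1 < N) := ⟨hN⟩
  have hσ_swap : ∀ i C, σ i C = fun j => C (Equiv.swap i (i + 1) j) := by
    intro i C; funext j
    rw [hσ, Equiv.swap_apply_def]
    split_ifs <;> rfl
  have hZσ : ∀ i, Z (σ i A) = Z A * Real.exp ((A i - A (i + 1)) * (dψ i / N)) := by
    intro i
    have hswap := sum_affine_comp_swap_sub (fun j : ZMod N => φa (j.val / N))
      (fun j => φb (j.val / N)) A (succ_ne_self i).symm
    have hwrap : ∀ f : ℝ → ℝ, Function.Periodic f 1 →
        f (((i + 1).val : ℝ) / N) = f (((i.val : ℝ) + 1) / N) := fun f hf => by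
      simpa only [Nat.cast_one] using hf.apply_zmod_val_add_natCast_div i 1
    rw [hwrap φa hφa, hwrap φb hφb, ← Pi.sub_apply φa, ← Pi.sub_apply φa, ← hψ] at hswap
    rw [hZ, hZ, hσ_swap, ← Real.exp_add, hdψ]
    congr 1
    linear_combination (1 / (N : ℝ)) * hswap
  rw [Finset.mul_sum]
  refine Finset.sum_congr rfl fun i _ => ?_
  rw [hZσ, hB, hB, hltab, hltba, neg_div, ← rate_mul_sq_exp_sub_one (hA i) (hA (i + 1))]
  ring

/-- With the notation of the ASEP exchange dynamics,
`Σᵢ [λ_ab Aᵢ Bᵢ₊₁ + λ_ba Bᵢ Aᵢ₊₁] (Z(σᵢA) - Z(A))² = Z(A)² · R^N(A)`, where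
`R^N(A) = Σᵢ [(λ̃_ab(i,N)²/λ_ab(N)) Aᵢ Bᵢ₊₁ + (λ̃_ba(i,N)²/λ_ba(N)) Bᵢ Aᵢ₊₁]`. -/
theorem stmt_3 (N : ℕ) [NeZero N] (hN : 2 ≤ N)
    (φa φb : ℝ → ℝ) (hφa : Function.Periodic φa 1) (hφb : Function.Periodic φb 1)
    (ψ : ℝ → ℝ) (hψ : ψ = φa - φb)
    (lab lba : ℝ) (hlab : 0 < lab) (hlba : 0 < lba)
    (A : ZMod N → ℝ) (hA : ∀ i, A i = 0 ∨ A i = 1)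
    (B : ZMod N → ℝ) (hB : ∀ i, B i = 1 - A i)
    (Z : (ZMod N → ℝ) → ℝ)
    (hZ : ∀ C : ZMod N → ℝ,
      Z C = Real.exp ((1 / (N : ℝ)) *
        ∑ i : ZMod N, (φa ((i.val : ℝ) / N) * C i + φb ((i.val : ℝ) / N) * (1 - C i))))
    (σ : ZMod N → (ZMod N → ℝ) → ZMod N → ℝ)
    (hσ : ∀ i C j, σ i C j = if j = i then C (i + 1) else if j = i + 1 then C i else C j)
    (dψ : ZMod N → ℝ)
    (hdψ : ∀ i : ZMod N, dψ i = ψ (((i.val : ℝ) + 1) / N) - ψ ((i.val : ℝ) / N))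
    (ltab ltba : ZMod N → ℝ)
    (hltab : ∀ i, ltab i = lab * (Real.exp (dψ i / N) - 1))
    (hltba : ∀ i, ltba i = lba * (Real.exp (-dψ i / N) - 1)) :
    ∑ i : ZMod N, (lab * A i * B (i + 1) + lba * B i * A (i + 1)) * (Z (σ i A) - Z A) ^ 2
      = Z A ^ 2 *
        ∑ i : ZMod N, (ltab i ^ 2 / lab * A i * B (i + 1) + ltba i ^ 2 / lba * B i * A (i + 1)) :=
  stmt_3_general N hN φa φb hφa hφb ψ hψ lab lba A hA B hB Z hZ σ hσ dψ hdψ ltab ltba hltab hltba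
end
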